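/- For i = 1,2, let q_i(x,ξ) = (1/2) c_i(x) ξ² + 2 ∫_{(0,∞)} (1 − cos(ξ y)) ν_i(x,dy) be one-dimensional symmetric symbols (so c_i : ℝ → [0,∞) with sup_x c_i(x) < ∞, and ν_i kernels of Borel measures on (0,∞) with sup_x ∫ min{1,y²} ν_i(x,dy) < ∞). Assume there is a kernel ρ of Borel measures on (0,∞) such that ν_1(x,B) ≤ ν_2(x,B) + ρ(x,B) and ν_2(x,B) ≤ ν_1(x,B) + ρ(x,B) for all x ∈ ℝ and Borel B ⊆ (0,∞), and sup_{x∈ℝ} ∫_{(0,∞)} y² ρ(x,dy) < ∞. If lim_{ξ→0} inf_{x∈ℝ} q_1(x,ξ)/ξ² = ∞ and ∫_{{|ξ|<r}} dξ / inf_{x∈ℝ} q_1(x,ξ) < ∞ for some r > 0, then lim_{ξ→0} inf_{x∈ℝ} q_2(x,ξ)/ξ² = ∞ and ∫_{{|ξ|<r}} dξ / inf_{x∈ℝ} q_2(x,ξ) < ∞ for some r > 0. -/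

import Mathlib

open MeasureTheory Filter Topology
open scoped ENNReal

/-- A one-dimensional symmetric symbol:
`q(x,ξ) = (1/2)c(x)ξ² + 2∫_{(0,∞)} (1 − cos(ξy)) ν(x,dy)`, valued in `[0,∞]`. -/
noncomputable def oneDimSymbol (c : ℝ → ℝ) (ν : ℝ → MeasureTheory.Measure ℝ)
    (x ξ : ℝ) : ℝ≥0∞ :=
  ENNReal.ofReal ((1 / 2) * c x * ξ ^ 2) +
    2 * ∫⁻ y in Set.Ioi (0 : ℝ), ENNReal.ofReal (1 - Real.cos (ξ * y)) ∂(ν x)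

/-!
Since `2 (1 - cos t) ≤ t²`, the diffusion part of `q₁` and the part of `ν₁` not dominated by `ν₂`
contribute `O(ξ²)` uniformly in `x`: `q₁ ≤ q₂ + C ξ²` with `C = sup c₁ / 2 + sup ∫ y² ρ(x,dy)`.
A perturbation of order `ξ²` does not affect `q / ξ² → ∞` at `0`, and once `q₁ ≥ 2 C ξ²` it gives
`q₂ ≥ q₁ / 2`, so `1 / q₂` is integrable near `0` together with `1 / q₁`.
-/

lemma MeasureTheory.Measure.restrict_le_add_restrict {α : Type*} [MeasurableSpace α]
    {μ ν ρ : Measure α} {s : Set α} (hs : MeasurableSet s)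
    (h : ∀ B, MeasurableSet B → B ⊆ s → μ B ≤ ν B + ρ B) :
    μ.restrict s ≤ ν.restrict s + ρ.restrict s := by
  refine Measure.le_intro fun B hB _ => ?_
  rw [Measure.add_apply, Measure.restrict_apply hB, Measure.restrict_apply hB,
    Measure.restrict_apply hB]
  exact h _ (hB.inter hs) Set.inter_subset_right

lemma two_mul_lintegral_one_sub_cos_le (μ : Measure ℝ) (ξ : ℝ) :
    2 * ∫⁻ y, ENNReal.ofReal (1 - Real.cos (ξ * y)) ∂μ ≤
      ENNReal.ofReal (ξ ^ 2) * ∫⁻ y, ENNReal.ofReal (y ^ 2) ∂μ := by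
  rw [← lintegral_const_mul' _ _ ENNReal.ofNat_ne_top,
    ← lintegral_const_mul' _ _ ENNReal.ofReal_ne_top]
  refine lintegral_mono fun y => ?_
  rw [← ENNReal.ofReal_ofNat, ← ENNReal.ofReal_mul zero_le_two,
    ← ENNReal.ofReal_mul (sq_nonneg ξ)]
  refine ENNReal.ofReal_le_ofReal ?_
  nlinarith [Real.one_sub_sq_div_two_le_cos (x := ξ * y)]

lemma oneDimSymbol_le_add_mul_sq {c₁ c₂ : ℝ → ℝ} {ν₁ ν₂ ρ : ℝ → Measure ℝ} {x K : ℝ}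
    {M : ℝ≥0∞} (hc : c₁ x ≤ K)
    (hdom : ∀ B, MeasurableSet B → B ⊆ Set.Ioi (0 : ℝ) → ν₁ x B ≤ ν₂ x B + ρ x B)
    (hρ : ∫⁻ y in Set.Ioi (0 : ℝ), ENNReal.ofReal (y ^ 2) ∂(ρ x) ≤ M) (ξ : ℝ) :
    oneDimSymbol c₁ ν₁ x ξ ≤
      oneDimSymbol c₂ ν₂ x ξ + (ENNReal.ofReal (K / 2) + M) * ENNReal.ofReal (ξ ^ 2) := by
  set d := ENNReal.ofReal (ξ ^ 2)
  set f : ℝ → ℝ≥0∞ := fun y => ENNReal.ofReal (1 - Real.cos (ξ * y))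
  have hdiffusion : ENNReal.ofReal ((1 / 2) * c₁ x * ξ ^ 2) ≤ ENNReal.ofReal (K / 2) * d := by
    rw [← ENNReal.ofReal_mul' (sq_nonneg ξ)]
    exact ENNReal.ofReal_le_ofReal (by nlinarith [sq_nonneg ξ])
  have hjumps : ∫⁻ y in Set.Ioi 0, f y ∂(ν₁ x) ≤
      ∫⁻ y in Set.Ioi 0, f y ∂(ν₂ x) + ∫⁻ y in Set.Ioi 0, f y ∂(ρ x) := by
    rw [← lintegral_add_measure]
    exact lintegral_mono' (Measure.restrict_le_add_restrict measurableSet_Ioi hdom) le_rfl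
  have hperturbation : 2 * ∫⁻ y in Set.Ioi 0, f y ∂(ρ x) ≤ M * d :=
    (two_mul_lintegral_one_sub_cos_le _ ξ).trans (by rw [mul_comm M]; gcongr)
  calc oneDimSymbol c₁ ν₁ x ξ
      ≤ ENNReal.ofReal (K / 2) * d +
          (2 * ∫⁻ y in Set.Ioi 0, f y ∂(ν₂ x) + 2 * ∫⁻ y in Set.Ioi 0, f y ∂(ρ x)) := by
        rw [← mul_add]
        exact add_le_add hdiffusion (by gcongr)
    _ ≤ ENNReal.ofReal (K / 2) * d + (2 * ∫⁻ y in Set.Ioi 0, f y ∂(ν₂ x) + M * d) := by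
        gcongr
    _ ≤ oneDimSymbol c₂ ν₂ x ξ + (ENNReal.ofReal (K / 2) + M) * d := by
        rw [oneDimSymbol, add_mul]
        calc _ = 2 * ∫⁻ y in Set.Ioi 0, f y ∂(ν₂ x) + (ENNReal.ofReal (K / 2) * d + M * d) := by
              ring
          _ ≤ _ := add_le_add le_add_self le_rfl

section Perturbation

variable {α : Type*} {l : Filter α} {f g w : α → ℝ≥0∞} {C : ℝ≥0∞}

lemma tendsto_div_top_of_le_add_mul (hC : C ≠ ∞) (hle : ∀ a, f a ≤ g a + C * w a)
    (hw : ∀ᶠ a in l, w a ≠ 0) (hf : Tendsto (fun a => f a / w a) l (𝓝 ∞)) :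
    Tendsto (fun a => g a / w a) l (𝓝 ∞) := by
  rw [ENNReal.tendsto_nhds_top_iff_nnreal] at hf ⊢
  intro b
  filter_upwards [hf (b + C.toNNReal), hw] with a hfa hwa
  have : f a / w a ≤ g a / w a + C := by
    calc f a / w a ≤ (g a + C * w a) / w a := by gcongr; exact hle a
      _ ≤ g a / w a + C := by
        rw [ENNReal.add_div, mul_div_assoc]
        exact add_le_add le_rfl ((mul_le_mul_right ENNReal.div_self_le_one _).trans_eq (mul_one C))
  rw [ENNReal.coe_add, ENNReal.coe_toNNReal hC] at hfa
  exact (ENNReal.add_lt_add_iff_right hC).mp (hfa.trans_le this)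

lemma le_two_mul_of_le_add {a b e : ℝ≥0∞} (he : e ≠ ∞) (hle : a ≤ b + e) (hsmall : 2 * e ≤ a) :
    a ≤ 2 * b := by
  rcases eq_or_ne b ∞ with rfl | hb
  · simp
  have ha : a ≠ ∞ := ne_top_of_le_ne_top (ENNReal.add_ne_top.mpr ⟨hb, he⟩) hle
  refine ENNReal.le_of_add_le_add_right ha ?_
  calc a + a = 2 * a := (two_mul a).symm
    _ ≤ 2 * b + 2 * e := by rw [← mul_add]; gcongr
    _ ≤ 2 * b + a := by gcongr

lemma eventually_inv_le_two_mul_inv (hC : C ≠ ∞) (hle : ∀ a, f a ≤ g a + C * w a)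
    (hw : ∀ᶠ a in l, w a ≠ 0) (hw' : ∀ a, w a ≠ ∞) (hf : Tendsto (fun a => f a / w a) l (𝓝 ∞)) :
    ∀ᶠ a in l, (g a)⁻¹ ≤ 2 * (f a)⁻¹ := by
  have hlarge : ∀ᶠ a in l, 2 * C < f a / w a :=
    hf.eventually (lt_mem_nhds (ENNReal.mul_lt_top ENNReal.ofNat_lt_top hC.lt_top))
  filter_upwards [hlarge, hw] with a ha hwa
  have hsmall : 2 * (C * w a) ≤ f a := by
    rw [← mul_assoc]
    exact ((ENNReal.lt_div_iff_mul_lt (Or.inl hwa) (Or.inl (hw' a))).mp ha).le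
  have := le_two_mul_of_le_add (ENNReal.mul_ne_top hC (hw' a)) (hle a) hsmall
  calc (g a)⁻¹ ≤ (f a / 2)⁻¹ := ENNReal.inv_le_inv' (ENNReal.div_le_of_le_mul' this)
    _ = 2 * (f a)⁻¹ := by
      rw [ENNReal.inv_div (Or.inl ENNReal.ofNat_ne_top) (Or.inl two_ne_zero), div_eq_mul_inv]

end Perturbation

lemma exists_lintegral_ball_lt_top_of_eventually_le {E : Type*} [PseudoMetricSpace E]
    [MeasurableSpace E] [OpensMeasurableSpace E] {μ : Measure E} [NullSingletonClass μ] {x : E}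
    {F G : E → ℝ≥0∞} {c : ℝ≥0∞} (hc : c ≠ ∞) (hle : ∀ᶠ y in 𝓝[≠] x, G y ≤ c * F y)
    (hF : ∃ r > 0, ∫⁻ y in Metric.ball x r, F y ∂μ < ∞) :
    ∃ r > 0, ∫⁻ y in Metric.ball x r, G y ∂μ < ∞ := by
  obtain ⟨r, hr, hFr⟩ := hF
  obtain ⟨ε, hε, hball⟩ := Metric.mem_nhdsWithin_iff.mp hle
  refine ⟨min r ε, lt_min hr hε, ?_⟩
  have hae : ∀ᵐ y ∂μ.restrict (Metric.ball x (min r ε)), G y ≤ c * F y := by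
    filter_upwards [ae_restrict_of_ae (μ.ae_ne x),
      ae_restrict_mem Metric.isOpen_ball.measurableSet] with y hyx hy
    exact hball ⟨Metric.ball_subset_ball (min_le_right r ε) hy, hyx⟩
  calc ∫⁻ y in Metric.ball x (min r ε), G y ∂μ
      ≤ ∫⁻ y in Metric.ball x (min r ε), c * F y ∂μ := lintegral_mono_ae hae
    _ = c * ∫⁻ y in Metric.ball x (min r ε), F y ∂μ := lintegral_const_mul' _ _ hc
    _ ≤ c * ∫⁻ y in Metric.ball x r, F y ∂μ :=
        mul_le_mul_right (lintegral_mono_set (Metric.ball_subset_ball (min_le_left r ε))) c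
    _ < ∞ := ENNReal.mul_lt_top hc.lt_top hFr

theorem stmt11_general (c₁ c₂ : ℝ → ℝ) (ν₁ ν₂ ρ : ℝ → MeasureTheory.Measure ℝ)
    (hc₁b : ∃ K : ℝ, ∀ x, c₁ x ≤ K)
    (hdom₁ : ∀ x, ∀ B : Set ℝ, MeasurableSet B → B ⊆ Set.Ioi (0 : ℝ) →
      ν₁ x B ≤ ν₂ x B + ρ x B)
    (hρ : (⨆ x, ∫⁻ y in Set.Ioi (0 : ℝ), ENNReal.ofReal (y ^ 2) ∂(ρ x)) < ∞)
    (hlim₁ : Tendsto (fun ξ : ℝ => (⨅ x, oneDimSymbol c₁ ν₁ x ξ) / ENNReal.ofReal (ξ ^ 2))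
      (𝓝[≠] (0 : ℝ)) (𝓝 ∞))
    (hCF₁ : ∃ r > (0 : ℝ), ∫⁻ ξ in Metric.ball (0 : ℝ) r,
      (⨅ x, oneDimSymbol c₁ ν₁ x ξ)⁻¹ < ∞) :
    Tendsto (fun ξ : ℝ => (⨅ x, oneDimSymbol c₂ ν₂ x ξ) / ENNReal.ofReal (ξ ^ 2))
      (𝓝[≠] (0 : ℝ)) (𝓝 ∞) ∧
    ∃ r > (0 : ℝ), ∫⁻ ξ in Metric.ball (0 : ℝ) r,
      (⨅ x, oneDimSymbol c₂ ν₂ x ξ)⁻¹ < ∞ := by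
  obtain ⟨K, hK⟩ := hc₁b
  set M := ⨆ x, ∫⁻ y in Set.Ioi (0 : ℝ), ENNReal.ofReal (y ^ 2) ∂(ρ x)
  have hC : ENNReal.ofReal (K / 2) + M ≠ ∞ := ENNReal.add_ne_top.mpr ⟨ENNReal.ofReal_ne_top, hρ.ne⟩
  have hle : ∀ ξ, (⨅ x, oneDimSymbol c₁ ν₁ x ξ) ≤
      (⨅ x, oneDimSymbol c₂ ν₂ x ξ) + (ENNReal.ofReal (K / 2) + M) * ENNReal.ofReal (ξ ^ 2) :=
    fun ξ => ENNReal.iInf_add ▸ iInf_mono fun x =>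
      oneDimSymbol_le_add_mul_sq (hK x) (hdom₁ x) (le_iSup_iff.mpr fun _ h => h x) ξ
  have hw : ∀ᶠ ξ : ℝ in 𝓝[≠] 0, ENNReal.ofReal (ξ ^ 2) ≠ 0 :=
    eventually_nhdsWithin_of_forall fun ξ (hξ : ξ ≠ 0) => by positivity
  exact ⟨tendsto_div_top_of_le_add_mul hC hle hw hlim₁,
    exists_lintegral_ball_lt_top_of_eventually_le ENNReal.ofNat_ne_top
      (eventually_inv_le_two_mul_inv hC hle hw (fun _ => ENNReal.ofReal_ne_top) hlim₁) hCF₁⟩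

/-- perturbations of the Lévy kernel with uniformly bounded second moment
do not affect the Chung–Fuchs transience condition (3.2)+(1.4). -/
theorem stmt11 (c₁ c₂ : ℝ → ℝ) (ν₁ ν₂ ρ : ℝ → MeasureTheory.Measure ℝ)
    (hc₁ : ∀ x, 0 ≤ c₁ x) (hc₂ : ∀ x, 0 ≤ c₂ x)
    (hc₁b : ∃ K : ℝ, ∀ x, c₁ x ≤ K) (hc₂b : ∃ K : ℝ, ∀ x, c₂ x ≤ K)
    (hν₁ : (⨆ x, ∫⁻ y in Set.Ioi (0 : ℝ), ENNReal.ofReal (min 1 (y ^ 2)) ∂(ν₁ x)) < ∞)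
    (hν₂ : (⨆ x, ∫⁻ y in Set.Ioi (0 : ℝ), ENNReal.ofReal (min 1 (y ^ 2)) ∂(ν₂ x)) < ∞)
    (hdom₁ : ∀ x, ∀ B : Set ℝ, MeasurableSet B → B ⊆ Set.Ioi (0 : ℝ) →
      ν₁ x B ≤ ν₂ x B + ρ x B)
    (hdom₂ : ∀ x, ∀ B : Set ℝ, MeasurableSet B → B ⊆ Set.Ioi (0 : ℝ) →
      ν₂ x B ≤ ν₁ x B + ρ x B)
    (hρ : (⨆ x, ∫⁻ y in Set.Ioi (0 : ℝ), ENNReal.ofReal (y ^ 2) ∂(ρ x)) < ∞)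
    (hm₁ : Measurable fun ξ : ℝ => ⨅ x, oneDimSymbol c₁ ν₁ x ξ)
    (hm₂ : Measurable fun ξ : ℝ => ⨅ x, oneDimSymbol c₂ ν₂ x ξ)
    (hlim₁ : Tendsto (fun ξ : ℝ => (⨅ x, oneDimSymbol c₁ ν₁ x ξ) / ENNReal.ofReal (ξ ^ 2))
      (𝓝[≠] (0 : ℝ)) (𝓝 ∞))
    (hCF₁ : ∃ r > (0 : ℝ), ∫⁻ ξ in Metric.ball (0 : ℝ) r,
      (⨅ x, oneDimSymbol c₁ ν₁ x ξ)⁻¹ < ∞) :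
    Tendsto (fun ξ : ℝ => (⨅ x, oneDimSymbol c₂ ν₂ x ξ) / ENNReal.ofReal (ξ ^ 2))
      (𝓝[≠] (0 : ℝ)) (𝓝 ∞) ∧
    ∃ r > (0 : ℝ), ∫⁻ ξ in Metric.ball (0 : ℝ) r,
      (⨅ x, oneDimSymbol c₂ ν₂ x ξ)⁻¹ < ∞ :=
  stmt11_general c₁ c₂ ν₁ ν₂ ρ hc₁b hdom₁ hρ hlim₁ hCF₁
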